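/- Let 1 < p < ∞ and γ ∈ ℝ. The maximal operator T_η f(x) = sup_{t>2x} ∫_{t/2}^t z^{η−1} |f(z)| (t−z+x)^{−η} dz is bounded on L^p((0,∞), x^γ dx) in each of the following cases: (a) η > 1 and γ ≥ (η−1)p; (b) η = 1 and γ > 0; (c) 0 < η < 1 and γ ≥ η − 1; (d) η ≤ 0 and γ > −1. -/

import Mathlib

/-!
Away from the endpoint, i.e. when `γ > max (-1) ((η - 1) p)`, Hölder's inequality on `(t/2, t)`,
with the weight split so that the kernel factor becomes `z^(s-1) (t - z + x)^(-ηq)` for some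
`s < 1`, `s ≤ ηq`, gives a bound independent of `t`:
`T_η f(x)^p ≲ x^(s(p-1) - ηp) ∫_x^∞ |f z|^p z^((η-1)p + (1-s)(p-1)) dz`.
Integrating against `x^γ` and exchanging the integrals closes the estimate as soon as
`γ + s(p-1) - ηp > -1`, which a suitable `s` achieves.

At the endpoint `η > 1`, `γ = (η - 1) p`, put `g z = z^(η-1) |f z|`, so that the claim is
`‖x^(η-1) T_η f‖_p ≲ ‖g‖_p`. Splitting `g` at a level `l` gives
`x^(η-1) T_η f(x) ≤ x⁻¹ ∫ (g - l)₊ + l / (η - 1)` for every `l`; the level `λ(x)` balancing the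
two terms is antitone with `|{λ > l}| ≤ (η - 1) ∫ (g - l)₊ / l`, and the layer-cake formula together
with `∫_0^∞ (G - l)₊ l^(p-2) dl = G^p / (p (p-1))` bounds `‖λ‖_p^p` by a multiple of `‖g‖_p^p`.
-/

open MeasureTheory Set Filter
open scoped ENNReal NNReal

noncomputable def Tmax (η : ℝ) (f : ℝ → ℝ) (x : ℝ) : ℝ≥0∞ :=
  ⨆ t ∈ Set.Ioi (2 * x),
    ∫⁻ z in Set.Ioo (t / 2) t, ENNReal.ofReal (z ^ (η - 1) * |f z| * (t - z + x) ^ (-η))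

noncomputable def wNorm (p δ : ℝ) (g : ℝ → ℝ≥0∞) : ℝ≥0∞ :=
  (∫⁻ x in Set.Ioi (0 : ℝ), g x ^ p * ENNReal.ofReal (x ^ δ)) ^ (1 / p)

noncomputable def wNormR (p δ : ℝ) (f : ℝ → ℝ) : ℝ≥0∞ :=
  wNorm p δ fun x => ENNReal.ofReal |f x|

lemma lintegral_Ioo_zero_rpow {c r : ℝ} (hr : -1 < r) (hc : 0 < c) :
    ∫⁻ x in Ioo 0 c, ENNReal.ofReal (x ^ r) = ENNReal.ofReal (c ^ (r + 1) / (r + 1)) := by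
  have hint : IntegrableOn (fun x : ℝ ↦ x ^ r) (Ioo 0 c) :=
    (intervalIntegrable_iff_integrableOn_Ioo_of_le hc.le).mp
      (intervalIntegral.intervalIntegrable_rpow' hr)
  rw [← ofReal_integral_eq_lintegral_ofReal hint
      (ae_restrict_of_forall_mem measurableSet_Ioo fun x hx ↦ Real.rpow_nonneg hx.1.le r),
    ← integral_Ioc_eq_integral_Ioo, ← intervalIntegral.integral_of_le hc.le,
    integral_rpow (Or.inl hr), Real.zero_rpow (by linarith), sub_zero]

lemma lintegral_Ioi_rpow {c s : ℝ} (hs : s < -1) (hc : 0 < c) :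
    ∫⁻ x in Ioi c, ENNReal.ofReal (x ^ s) = ENNReal.ofReal (-c ^ (s + 1) / (s + 1)) := by
  rw [← ofReal_integral_eq_lintegral_ofReal (integrableOn_Ioi_rpow_of_lt hs hc)
      (ae_restrict_of_forall_mem measurableSet_Ioi fun x hx ↦
        Real.rpow_nonneg (hc.trans hx).le s),
    integral_Ioi_rpow_of_lt hs hc]

lemma setLIntegral_Ioo_comp_const_sub (g : ℝ → ℝ≥0∞) (a b c : ℝ) :
    ∫⁻ z in Ioo a b, g (c - z) = ∫⁻ v in Ioo (c - b) (c - a), g v := by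
  have hpre : (c - ·) ⁻¹' Ioo (c - b) (c - a) = Ioo a b := by
    ext z
    simp only [mem_preimage, mem_Ioo]
    constructor <;> rintro ⟨h₁, h₂⟩ <;> constructor <;> linarith
  rw [← hpre]
  exact (Measure.measurePreserving_sub_left volume c).setLIntegral_comp_preimage_emb
    (Homeomorph.subLeft c).measurableEmbedding g _

lemma lintegral_Ioo_half_sub_add_rpow (r t x : ℝ) :
    ∫⁻ z in Ioo (t / 2) t, ENNReal.ofReal ((t - z + x) ^ r) =
      ∫⁻ v in Ioo x (x + t / 2), ENNReal.ofReal (v ^ r) := by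
  simp_rw [show ∀ z, t - z + x = t + x - z by intro z; ring]
  rw [setLIntegral_Ioo_comp_const_sub (fun v ↦ ENNReal.ofReal (v ^ r))]
  congr 2
  congr 1 <;> ring

lemma lintegral_Ioo_half_sub_add_rpow_le {s t x : ℝ} (hs : s < 1) (hx : 0 < x) (hxt : 2 * x < t) :
    ∫⁻ z in Ioo (t / 2) t, ENNReal.ofReal ((t - z + x) ^ (-s)) ≤
      ENNReal.ofReal (t ^ (1 - s) / (1 - s)) := by
  rw [lintegral_Ioo_half_sub_add_rpow]
  calc ∫⁻ v in Ioo x (x + t / 2), ENNReal.ofReal (v ^ (-s))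
      ≤ ∫⁻ v in Ioo 0 t, ENNReal.ofReal (v ^ (-s)) :=
        lintegral_mono_set fun v hv ↦ ⟨hx.trans hv.1, by linarith [hv.2]⟩
    _ = ENNReal.ofReal (t ^ (1 - s) / (1 - s)) := by
        rw [lintegral_Ioo_zero_rpow (by linarith) (by linarith), neg_add_eq_sub]

lemma lintegral_Ioo_half_sub_add_rpow_neg_le {η x : ℝ} (hη : 1 < η) (hx : 0 < x) (t : ℝ) :
    ∫⁻ z in Ioo (t / 2) t, ENNReal.ofReal ((t - z + x) ^ (-η)) ≤
      ENNReal.ofReal (x ^ (1 - η) / (η - 1)) := by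
  rw [lintegral_Ioo_half_sub_add_rpow]
  calc ∫⁻ v in Ioo x (x + t / 2), ENNReal.ofReal (v ^ (-η))
      ≤ ∫⁻ v in Ioi x, ENNReal.ofReal (v ^ (-η)) := lintegral_mono_set Ioo_subset_Ioi_self
    _ = ENNReal.ofReal (x ^ (1 - η) / (η - 1)) := by
        rw [lintegral_Ioi_rpow (by linarith) hx, neg_add_eq_sub, neg_div, ← div_neg, neg_sub]

lemma lintegral_rpow_mul_sub_add_rpow_le {b s t x : ℝ} (hs : s < 1) (hsb : s ≤ b) (hx : 0 < x)
    (hxt : 2 * x < t) :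
    ∫⁻ z in Ioo (t / 2) t, ENNReal.ofReal (z ^ (s - 1) * (t - z + x) ^ (-b)) ≤
      ENNReal.ofReal (2 ^ (1 - s) / (1 - s) * x ^ (s - b)) := by
  have ht : 0 < t / 2 := by linarith
  have hpt : ∀ z ∈ Ioo (t / 2) t, ENNReal.ofReal (z ^ (s - 1) * (t - z + x) ^ (-b)) ≤
      ENNReal.ofReal ((t / 2) ^ (s - 1) * x ^ (s - b)) * ENNReal.ofReal ((t - z + x) ^ (-s)) := by
    rintro z ⟨hz₁, hz₂⟩
    have hv : x ≤ t - z + x := by linarith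
    have hv₀ : 0 < t - z + x := hx.trans_le hv
    rw [← ENNReal.ofReal_mul (by positivity), mul_assoc]
    refine ENNReal.ofReal_le_ofReal (mul_le_mul (Real.rpow_le_rpow_of_nonpos ht hz₁.le
      (by linarith)) ?_ (by positivity) (by positivity))
    calc (t - z + x) ^ (-b) = (t - z + x) ^ (s - b) * (t - z + x) ^ (-s) := by
          rw [← Real.rpow_add hv₀]; ring_nf
      _ ≤ x ^ (s - b) * (t - z + x) ^ (-s) :=
          mul_le_mul_of_nonneg_right (Real.rpow_le_rpow_of_nonpos hx hv (by linarith))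
            (by positivity)
  calc ∫⁻ z in Ioo (t / 2) t, ENNReal.ofReal (z ^ (s - 1) * (t - z + x) ^ (-b))
      ≤ ∫⁻ z in Ioo (t / 2) t,
          ENNReal.ofReal ((t / 2) ^ (s - 1) * x ^ (s - b)) * ENNReal.ofReal ((t - z + x) ^ (-s)) :=
        setLIntegral_mono' measurableSet_Ioo hpt
    _ ≤ ENNReal.ofReal ((t / 2) ^ (s - 1) * x ^ (s - b)) *
          ENNReal.ofReal (t ^ (1 - s) / (1 - s)) := by
        rw [lintegral_const_mul' _ _ ENNReal.ofReal_ne_top]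
        gcongr
        exact lintegral_Ioo_half_sub_add_rpow_le hs hx hxt
    _ = ENNReal.ofReal (2 ^ (1 - s) / (1 - s) * x ^ (s - b)) := by
        rw [← ENNReal.ofReal_mul (by positivity)]
        congr 1
        rw [Real.div_rpow (by linarith) zero_le_two, show 1 - s = -(s - 1) by ring,
          Real.rpow_neg (by linarith), Real.rpow_neg zero_le_two]
        have : t ^ (s - 1) ≠ 0 := (Real.rpow_pos_of_pos (by linarith) _).ne'
        field_simp

lemma lintegral_rpow_mul_lintegral_Ioi {u : ℝ} (hu : -1 < u) {H : ℝ → ℝ≥0∞}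
    (hH : Measurable H) :
    ∫⁻ x in Ioi 0, ENNReal.ofReal (x ^ u) * ∫⁻ z in Ioi x, H z =
      ∫⁻ z in Ioi 0, H z * ENNReal.ofReal (z ^ (u + 1) / (u + 1)) := by
  have hF : Measurable (Function.uncurry fun x z : ℝ ↦
      ENNReal.ofReal (x ^ u) * (Ioi x).indicator H z) := by
    simp only [Function.uncurry_def, indicator_apply, mem_Ioi]
    exact (measurable_fst.pow_const u).ennreal_ofReal.mul <|
      Measurable.ite (measurableSet_lt measurable_fst measurable_snd) (hH.comp measurable_snd)
        measurable_const
  calc ∫⁻ x in Ioi 0, ENNReal.ofReal (x ^ u) * ∫⁻ z in Ioi x, H z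
      = ∫⁻ x in Ioi 0, ∫⁻ z in Ioi 0, ENNReal.ofReal (x ^ u) * (Ioi x).indicator H z := by
        refine setLIntegral_congr_fun measurableSet_Ioi fun x hx ↦ ?_
        rw [lintegral_const_mul' _ _ ENNReal.ofReal_ne_top,
          setLIntegral_indicator measurableSet_Ioi,
          inter_eq_self_of_subset_left (Ioi_subset_Ioi (le_of_lt (mem_Ioi.mp hx)))]
    _ = ∫⁻ z in Ioi 0, ∫⁻ x in Ioi 0, ENNReal.ofReal (x ^ u) * (Ioi x).indicator H z :=
        lintegral_lintegral_swap hF.aemeasurable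
    _ = ∫⁻ z in Ioi 0, H z * ENNReal.ofReal (z ^ (u + 1) / (u + 1)) := by
        refine setLIntegral_congr_fun measurableSet_Ioi fun z hz ↦ ?_
        have hslice : ∀ x, ENNReal.ofReal (x ^ u) * (Ioi x).indicator H z =
            (Iio z).indicator (fun x ↦ ENNReal.ofReal (x ^ u)) x * H z := by
          intro x
          by_cases hxz : x < z <;> simp [hxz]
        simp_rw [hslice]
        rw [lintegral_mul_const _
            ((measurable_id'.pow_const u).ennreal_ofReal.indicator measurableSet_Iio),
          setLIntegral_indicator measurableSet_Iio, inter_comm, Ioi_inter_Iio,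
          lintegral_Ioo_zero_rpow hu hz, mul_comm]

lemma integral_sub_mul_rpow {p G : ℝ} (hp : 1 < p) (hG : 0 ≤ G) :
    ∫ l in (0 : ℝ)..G, (G - l) * l ^ (p - 2) = G ^ p / (p * (p - 1)) := by
  have hsplit : EqOn (fun l ↦ (G - l) * l ^ (p - 2)) (fun l ↦ G * l ^ (p - 2) - l ^ (p - 1))
      (uIcc 0 G) := by
    intro l hl
    rw [uIcc_of_le hG] at hl
    have : l ^ (p - 1) = l ^ (p - 2) * l := by
      rw [← Real.rpow_add_one' hl.1 (by linarith)]; ring_nf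
    simp only [this]; ring
  have hi : ∀ r : ℝ, -1 < r → IntervalIntegrable (fun l : ℝ ↦ l ^ r) volume 0 G :=
    fun r hr ↦ intervalIntegral.intervalIntegrable_rpow' hr
  rw [intervalIntegral.integral_congr hsplit,
    intervalIntegral.integral_sub ((hi _ (by linarith)).const_mul G) (hi _ (by linarith)),
    intervalIntegral.integral_const_mul, integral_rpow (Or.inl (by linarith)),
    integral_rpow (Or.inl (by linarith)), Real.zero_rpow (by linarith),
    Real.zero_rpow (by linarith),
    show p - 2 + 1 = p - 1 by ring, show p - 1 + 1 = p by ring,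
    sub_zero, sub_zero, ← mul_div_assoc, ← Real.rpow_one_add' hG (by linarith),
    show 1 + (p - 1) = p by ring]
  have : p - 1 ≠ 0 := by linarith
  field_simp
  ring

lemma lintegral_sub_mul_rpow {p G : ℝ} (hp : 1 < p) (hG : 0 ≤ G) :
    ∫⁻ l in Ioi 0, ENNReal.ofReal (G - l) * ENNReal.ofReal (l ^ (p - 2)) =
      ENNReal.ofReal (G ^ p / (p * (p - 1))) := by
  have hint : IntegrableOn (fun l : ℝ ↦ (G - l) * l ^ (p - 2)) (Ioc 0 G) :=
    (intervalIntegrable_iff_integrableOn_Ioc_of_le hG).mp <|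
      (intervalIntegral.intervalIntegrable_rpow' (by linarith)).continuousOn_mul
        (continuousOn_const.sub continuousOn_id)
  have htail : ∫⁻ l in Ioi G, ENNReal.ofReal ((G - l) * l ^ (p - 2)) = 0 := by
    rw [setLIntegral_congr_fun measurableSet_Ioi fun l (hl : G < l) ↦
      ENNReal.ofReal_of_nonpos (mul_nonpos_of_nonpos_of_nonneg (by linarith)
        (Real.rpow_nonneg (hG.trans hl.le) _)), lintegral_zero]
  calc ∫⁻ l in Ioi 0, ENNReal.ofReal (G - l) * ENNReal.ofReal (l ^ (p - 2))
      = ∫⁻ l in Ioi 0, ENNReal.ofReal ((G - l) * l ^ (p - 2)) :=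
        setLIntegral_congr_fun measurableSet_Ioi fun l (hl : 0 < l) ↦
          (ENNReal.ofReal_mul' (Real.rpow_nonneg hl.le _)).symm
    _ = ∫⁻ l in Ioc 0 G, ENNReal.ofReal ((G - l) * l ^ (p - 2)) := by
        rw [← Ioc_union_Ioi_eq_Ioi hG, lintegral_union measurableSet_Ioi Ioc_disjoint_Ioi_same,
          htail, add_zero]
    _ = ENNReal.ofReal (G ^ p / (p * (p - 1))) := by
        rw [← ofReal_integral_eq_lintegral_ofReal hint
            (ae_restrict_of_forall_mem measurableSet_Ioc
              fun l hl ↦ mul_nonneg (by linarith [hl.2]) (Real.rpow_nonneg hl.1.le _)),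
          integral_Ioc_eq_integral_Ioo, ← integral_Ioc_eq_integral_Ioo,
          ← intervalIntegral.integral_of_le hG, integral_sub_mul_rpow hp hG]

lemma sub_le_rpow_one_sub_mul_rpow {a l p : ℝ} (hl : 0 < l) (hla : l ≤ a) (hp : 1 ≤ p) :
    a - l ≤ l ^ (1 - p) * a ^ p := by
  have ha : 0 < a := hl.trans_le hla
  calc a - l ≤ a * 1 := by linarith
    _ ≤ a * (a / l) ^ (p - 1) := by
        gcongr; exact Real.one_le_rpow ((one_le_div hl).mpr hla) (by linarith)
    _ = l ^ (1 - p) * a ^ p := by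
        rw [Real.div_rpow ha.le hl.le, show 1 - p = -(p - 1) by ring, Real.rpow_neg hl.le,
          Real.rpow_sub_one ha.ne']
        field_simp

noncomputable def excess (g : ℝ → ℝ) (l : ℝ) : ℝ≥0∞ :=
  ∫⁻ z in Ioi 0, ENNReal.ofReal (g z - l)

def admissibleLevels (g : ℝ → ℝ) (c x : ℝ) : Set ℝ :=
  {l | 0 < l ∧ excess g l ≤ ENNReal.ofReal (c * l * x)}

/-- The level `λ(x)` at which the two terms of `excess g l / x + c * l` balance. -/
noncomputable def excessLevel (g : ℝ → ℝ) (c x : ℝ) : ℝ :=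
  sInf (admissibleLevels g c x)

section Excess

variable {g : ℝ → ℝ} {p c : ℝ}

lemma excess_le_rpow_mul (hp : 1 ≤ p) {l : ℝ} (hl : 0 < l) :
    excess g l ≤ ENNReal.ofReal (l ^ (1 - p)) * ∫⁻ z in Ioi 0, ENNReal.ofReal (g z ^ p) := by
  rw [excess, ← lintegral_const_mul' _ _ ENNReal.ofReal_ne_top]
  refine lintegral_mono fun z ↦ ?_
  rcases le_or_gt (g z) l with hgl | hgl
  · simp [ENNReal.ofReal_of_nonpos (sub_nonpos.mpr hgl)]
  · rw [← ENNReal.ofReal_mul (Real.rpow_nonneg hl.le _)]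
    exact ENNReal.ofReal_le_ofReal (sub_le_rpow_one_sub_mul_rpow hl hgl.le hp)

lemma lintegral_excess_mul_rpow (hp : 1 < p) (hgm : Measurable g)
    (hg : ∀ z, 0 < z → 0 ≤ g z) :
    ∫⁻ l in Ioi 0, excess g l * ENNReal.ofReal (l ^ (p - 2)) =
      ENNReal.ofReal (1 / (p * (p - 1))) * ∫⁻ z in Ioi 0, ENNReal.ofReal (g z ^ p) := by
  have hm : Measurable (Function.uncurry fun l z ↦
      ENNReal.ofReal (g z - l) * ENNReal.ofReal (l ^ (p - 2))) :=
    ((hgm.comp measurable_snd).sub measurable_fst).ennreal_ofReal.mul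
      (measurable_fst.pow_const _).ennreal_ofReal
  simp_rw [excess, ← lintegral_mul_const' _ _ ENNReal.ofReal_ne_top]
  rw [lintegral_lintegral_swap hm.aemeasurable, ← lintegral_const_mul' _ _ ENNReal.ofReal_ne_top]
  refine setLIntegral_congr_fun measurableSet_Ioi fun z hz ↦ ?_
  rw [lintegral_sub_mul_rpow hp (hg z hz), ← ENNReal.ofReal_mul (by positivity)]
  congr 1
  ring

lemma excessLevel_nonneg (x : ℝ) : 0 ≤ excessLevel g c x :=
  Real.sInf_nonneg fun _ hl ↦ hl.1.le

lemma admissibleLevels_nonempty (hp : 1 < p) (hc : 0 < c)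
    (hQ : ∫⁻ z in Ioi 0, ENNReal.ofReal (g z ^ p) ≠ ⊤) {x : ℝ} (hx : 0 < x) :
    (admissibleLevels g c x).Nonempty := by
  set Q := ∫⁻ z in Ioi 0, ENNReal.ofReal (g z ^ p) with hQdef
  obtain ⟨l, hlQ, hl⟩ := ((((tendsto_rpow_atTop (by linarith : 0 < p)).const_mul_atTop
    (mul_pos hc hx)).eventually_ge_atTop Q.toReal).and (eventually_gt_atTop 0)).exists
  refine ⟨l, hl, (excess_le_rpow_mul hp.le hl).trans ?_⟩
  rw [← hQdef, ← ENNReal.ofReal_toReal hQ, ← ENNReal.ofReal_mul (Real.rpow_nonneg hl.le _)]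
  refine ENNReal.ofReal_le_ofReal ?_
  calc l ^ (1 - p) * Q.toReal ≤ l ^ (1 - p) * (c * x * l ^ p) := by gcongr
    _ = c * l * x := by
        rw [mul_left_comm, ← Real.rpow_add hl, sub_add_cancel, Real.rpow_one]; ring

lemma le_ofReal_excessLevel (hc : 0 < c) {x : ℝ} (hx : 0 < x)
    (hne : (admissibleLevels g c x).Nonempty) {F : ℝ≥0∞}
    (hF : ∀ l, 0 < l → F ≤ excess g l / ENNReal.ofReal x + ENNReal.ofReal (c * l)) :
    F ≤ ENNReal.ofReal (2 * c * excessLevel g c x) := by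
  have hle : ∀ l ∈ admissibleLevels g c x,
      F ≤ ENNReal.ofReal (2 * c * l) := by
    rintro l ⟨hl, hA⟩
    have hdiv : excess g l / ENNReal.ofReal x ≤ ENNReal.ofReal (c * l) := by
      rwa [ENNReal.div_le_iff (by simpa using hx) ENNReal.ofReal_ne_top,
        ← ENNReal.ofReal_mul (by positivity)]
    calc F ≤ ENNReal.ofReal (c * l) + ENNReal.ofReal (c * l) := (hF l hl).trans (by gcongr)
      _ = ENNReal.ofReal (2 * c * l) := by
        rw [← ENNReal.ofReal_add (by positivity) (by positivity)]; ring_nf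
  obtain ⟨l₀, hl₀⟩ := hne
  have hF_top : F ≠ ⊤ := ne_top_of_le_ne_top ENNReal.ofReal_ne_top (hle l₀ hl₀)
  rw [← ENNReal.ofReal_toReal hF_top]
  refine ENNReal.ofReal_le_ofReal ?_
  rw [← div_le_iff₀' (by positivity)]
  refine le_csInf ⟨l₀, hl₀⟩ fun l hl ↦ ?_
  rw [div_le_iff₀' (by positivity)]
  exact ENNReal.toReal_le_of_le_ofReal (mul_pos (by positivity) hl.1).le (hle l hl)

lemma excessLevel_antitoneOn (hc : 0 < c)
    (hne : ∀ x, 0 < x → (admissibleLevels g c x).Nonempty) :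
    AntitoneOn (excessLevel g c) (Ioi 0) := by
  intro x hx y _ hxy
  refine csInf_le_csInf ⟨0, fun l hl ↦ hl.1.le⟩ (hne x hx)
    fun l ⟨hl, hA⟩ ↦ ⟨hl, hA.trans ?_⟩
  gcongr

lemma volume_lt_excessLevel_le (hc : 0 < c) {l : ℝ} (hl : 0 < l) (hA : excess g l ≠ ⊤) :
    volume.restrict (Ioi 0) {x | l < excessLevel g c x} ≤
      ENNReal.ofReal ((excess g l).toReal / (c * l)) := by
  rw [Measure.restrict_apply' measurableSet_Ioi]
  refine (measure_mono (t := Ioc 0 ((excess g l).toReal / (c * l))) fun x hx ↦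
    ⟨hx.2, ?_⟩).trans (by rw [Real.volume_Ioc, sub_zero])
  obtain ⟨hlx, hx⟩ := hx
  by_contra! hbig
  have hmem : l ∈ admissibleLevels g c x := by
    refine ⟨hl, ?_⟩
    rw [← ENNReal.ofReal_toReal hA]
    refine ENNReal.ofReal_le_ofReal ?_
    rw [div_lt_iff₀ (by positivity)] at hbig
    linarith
  exact (csInf_le ⟨0, fun l hl ↦ hl.1.le⟩ hmem).not_gt hlx

lemma lintegral_excessLevel_rpow_le (hp : 1 < p) (hc : 0 < c) (hgm : Measurable g)
    (hg : ∀ z, 0 < z → 0 ≤ g z) (hQ : ∫⁻ z in Ioi 0, ENNReal.ofReal (g z ^ p) ≠ ⊤) :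
    ∫⁻ x in Ioi 0, ENNReal.ofReal (excessLevel g c x ^ p) ≤
      ENNReal.ofReal (1 / (c * (p - 1))) * ∫⁻ z in Ioi 0, ENNReal.ofReal (g z ^ p) := by
  have hp0 : 0 < p := by linarith
  have hA : ∀ l, 0 < l → excess g l ≠ ⊤ := fun l hl ↦
    ne_top_of_le_ne_top (ENNReal.mul_ne_top ENNReal.ofReal_ne_top hQ) (excess_le_rpow_mul hp.le hl)
  rw [lintegral_rpow_eq_lintegral_meas_lt_mul _ (Eventually.of_forall excessLevel_nonneg)
    (aemeasurable_restrict_of_antitoneOn measurableSet_Ioi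
      (excessLevel_antitoneOn hc fun x hx ↦ admissibleLevels_nonempty hp hc hQ hx)) hp0]
  calc ENNReal.ofReal p * ∫⁻ l in Ioi 0,
        volume.restrict (Ioi 0) {x | l < excessLevel g c x} * ENNReal.ofReal (l ^ (p - 1))
      ≤ ENNReal.ofReal p * ∫⁻ l in Ioi 0,
          ENNReal.ofReal (1 / c) * (excess g l * ENNReal.ofReal (l ^ (p - 2))) := by
        gcongr ENNReal.ofReal p * ?_
        refine setLIntegral_mono' measurableSet_Ioi fun l (hl : 0 < l) ↦ ?_
        calc volume.restrict (Ioi 0) {x | l < excessLevel g c x} * ENNReal.ofReal (l ^ (p - 1))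
            ≤ ENNReal.ofReal ((excess g l).toReal / (c * l)) * ENNReal.ofReal (l ^ (p - 1)) := by
              gcongr; exact volume_lt_excessLevel_le hc hl (hA l hl)
          _ = ENNReal.ofReal (1 / c) *
                (ENNReal.ofReal (excess g l).toReal * ENNReal.ofReal (l ^ (p - 2))) := by
              rw [← ENNReal.ofReal_mul (by positivity), ← ENNReal.ofReal_mul (by positivity),
                ← ENNReal.ofReal_mul (by positivity), show p - 1 = p - 2 + 1 by ring,
                Real.rpow_add_one hl.ne']
              congr 1
              field_simp
          _ = ENNReal.ofReal (1 / c) * (excess g l * ENNReal.ofReal (l ^ (p - 2))) := by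
              rw [ENNReal.ofReal_toReal (hA l hl)]
    _ = ENNReal.ofReal (1 / (c * (p - 1))) * ∫⁻ z in Ioi 0, ENNReal.ofReal (g z ^ p) := by
        rw [lintegral_const_mul' _ _ ENNReal.ofReal_ne_top, lintegral_excess_mul_rpow hp hgm hg,
          ← mul_assoc, ← mul_assoc, ← ENNReal.ofReal_mul hp0.le,
          ← ENNReal.ofReal_mul (by positivity)]
        congr 2
        field_simp

lemma lintegral_rpow_le_of_le_excess (hp : 1 < p) (hc : 0 < c) (hgm : Measurable g)
    (hg : ∀ z, 0 < z → 0 ≤ g z) {F : ℝ → ℝ≥0∞}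
    (hF : ∀ x, 0 < x → ∀ l, 0 < l →
      F x ≤ excess g l / ENNReal.ofReal x + ENNReal.ofReal (c * l)) :
    ∫⁻ x in Ioi 0, F x ^ p ≤
      ENNReal.ofReal ((2 * c) ^ p / (c * (p - 1))) *
        ∫⁻ z in Ioi 0, ENNReal.ofReal (g z ^ p) := by
  have hp0 : 0 < p := by linarith
  by_cases hQ : ∫⁻ z in Ioi 0, ENNReal.ofReal (g z ^ p) = ⊤
  · rw [hQ, ENNReal.mul_top (ENNReal.ofReal_pos.mpr
      (div_pos (by positivity) (mul_pos hc (by linarith)))).ne']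
    exact le_top
  calc ∫⁻ x in Ioi 0, F x ^ p
      ≤ ∫⁻ x in Ioi 0,
          ENNReal.ofReal ((2 * c) ^ p) * ENNReal.ofReal (excessLevel g c x ^ p) := by
        refine setLIntegral_mono' measurableSet_Ioi fun x (hx : 0 < x) ↦ ?_
        calc F x ^ p ≤ ENNReal.ofReal (2 * c * excessLevel g c x) ^ p := by
              gcongr
              exact le_ofReal_excessLevel hc hx (admissibleLevels_nonempty hp hc hQ hx) (hF x hx)
          _ = _ := by
              have := excessLevel_nonneg (g := g) (c := c) x
              rw [ENNReal.ofReal_rpow_of_nonneg (by positivity) hp0.le,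
                Real.mul_rpow (by positivity) this, ENNReal.ofReal_mul (by positivity)]
    _ = ENNReal.ofReal ((2 * c) ^ p) * ∫⁻ x in Ioi 0, ENNReal.ofReal (excessLevel g c x ^ p) :=
        lintegral_const_mul' _ _ ENNReal.ofReal_ne_top
    _ ≤ ENNReal.ofReal ((2 * c) ^ p) *
          (ENNReal.ofReal (1 / (c * (p - 1))) * ∫⁻ z in Ioi 0, ENNReal.ofReal (g z ^ p)) := by
        gcongr; exact lintegral_excessLevel_rpow_le hp hc hgm hg hQ
    _ = _ := by
        rw [← mul_assoc, ← ENNReal.ofReal_mul (by positivity), mul_one_div]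

end Excess

section Endpoint

variable {η : ℝ} {f : ℝ → ℝ}

lemma Tmax_le_excess (hη : 1 < η) (hf : Measurable f) {x l : ℝ} (hx : 0 < x) (hl : 0 ≤ l) :
    Tmax η f x ≤ ENNReal.ofReal (x ^ (-η)) * excess (fun z ↦ z ^ (η - 1) * |f z|) l +
      ENNReal.ofReal l * ENNReal.ofReal (x ^ (1 - η) / (η - 1)) := by
  refine iSup₂_le fun t (ht : 2 * x < t) ↦ ?_
  set g : ℝ → ℝ := fun z ↦ z ^ (η - 1) * |f z|
  have hsplit : ∀ z ∈ Ioo (t / 2) t,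
      ENNReal.ofReal (z ^ (η - 1) * |f z| * (t - z + x) ^ (-η)) ≤
        ENNReal.ofReal (x ^ (-η)) * ENNReal.ofReal (g z - l) +
          ENNReal.ofReal l * ENNReal.ofReal ((t - z + x) ^ (-η)) := by
    intro z hz
    have hv : x ≤ t - z + x := by linarith [hz.2]
    have hk : 0 ≤ (t - z + x) ^ (-η) := Real.rpow_nonneg (hx.le.trans hv) _
    calc ENNReal.ofReal (g z * (t - z + x) ^ (-η))
        = ENNReal.ofReal ((g z - l) * (t - z + x) ^ (-η) + l * (t - z + x) ^ (-η)) := by ring_nf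
      _ ≤ ENNReal.ofReal (g z - l) * ENNReal.ofReal ((t - z + x) ^ (-η)) +
            ENNReal.ofReal l * ENNReal.ofReal ((t - z + x) ^ (-η)) := by
        rw [← ENNReal.ofReal_mul' hk, ← ENNReal.ofReal_mul hl]; exact ENNReal.ofReal_add_le
      _ ≤ ENNReal.ofReal (g z - l) * ENNReal.ofReal (x ^ (-η)) +
            ENNReal.ofReal l * ENNReal.ofReal ((t - z + x) ^ (-η)) := by
        refine add_le_add_left (mul_le_mul_right ?_ _) _
        exact ENNReal.ofReal_le_ofReal (Real.rpow_le_rpow_of_nonpos hx hv (by linarith))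
      _ = _ := by rw [mul_comm (ENNReal.ofReal (g z - l))]
  have hgm : Measurable g := (measurable_id'.pow_const _).mul hf.abs
  calc ∫⁻ z in Ioo (t / 2) t, ENNReal.ofReal (z ^ (η - 1) * |f z| * (t - z + x) ^ (-η))
      ≤ ∫⁻ z in Ioo (t / 2) t, (ENNReal.ofReal (x ^ (-η)) * ENNReal.ofReal (g z - l) +
          ENNReal.ofReal l * ENNReal.ofReal ((t - z + x) ^ (-η))) :=
        setLIntegral_mono' measurableSet_Ioo hsplit
    _ = ENNReal.ofReal (x ^ (-η)) * (∫⁻ z in Ioo (t / 2) t, ENNReal.ofReal (g z - l)) +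
          ENNReal.ofReal l * ∫⁻ z in Ioo (t / 2) t, ENNReal.ofReal ((t - z + x) ^ (-η)) := by
        rw [lintegral_add_left ((hgm.sub_const l).ennreal_ofReal.const_mul _),
          lintegral_const_mul' _ _ ENNReal.ofReal_ne_top,
          lintegral_const_mul' _ _ ENNReal.ofReal_ne_top]
    _ ≤ _ := by
        gcongr
        · exact lintegral_mono_set fun z hz ↦ (mem_Ioi.mpr (by linarith [hz.1]))
        · exact lintegral_Ioo_half_sub_add_rpow_neg_le hη hx t

lemma lintegral_Tmax_rpow_le_endpoint {p : ℝ} (hp : 1 < p) (hη : 1 < η) (hf : Measurable f) :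
    ∫⁻ x in Ioi 0, Tmax η f x ^ p * ENNReal.ofReal (x ^ ((η - 1) * p)) ≤
      ENNReal.ofReal ((2 * (η - 1)⁻¹) ^ p / ((η - 1)⁻¹ * (p - 1))) *
        ∫⁻ z in Ioi 0, ENNReal.ofReal (|f z| ^ p * z ^ ((η - 1) * p)) := by
  have hp0 : 0 < p := by linarith
  set g : ℝ → ℝ := fun z ↦ z ^ (η - 1) * |f z|
  have hg : ∀ z, 0 < z → 0 ≤ g z := fun z hz ↦ by positivity
  have hF : ∀ x, 0 < x → ∀ l, 0 < l → Tmax η f x * ENNReal.ofReal (x ^ (η - 1)) ≤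
      excess g l / ENNReal.ofReal x + ENNReal.ofReal ((η - 1)⁻¹ * l) := by
    intro x hx l hl
    calc Tmax η f x * ENNReal.ofReal (x ^ (η - 1))
        ≤ (ENNReal.ofReal (x ^ (-η)) * excess g l +
            ENNReal.ofReal l * ENNReal.ofReal (x ^ (1 - η) / (η - 1))) *
              ENNReal.ofReal (x ^ (η - 1)) := by gcongr; exact Tmax_le_excess hη hf hx hl.le
      _ = excess g l * ENNReal.ofReal (x ^ (-η) * x ^ (η - 1)) +
            ENNReal.ofReal (l * (x ^ (1 - η) / (η - 1) * x ^ (η - 1))) := by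
        rw [ENNReal.ofReal_mul hl.le, ENNReal.ofReal_mul (by positivity),
          ENNReal.ofReal_mul (by positivity)]
        ring
      _ = excess g l / ENNReal.ofReal x + ENNReal.ofReal ((η - 1)⁻¹ * l) := by
        rw [← Real.rpow_add hx, div_mul_eq_mul_div, ← Real.rpow_add hx,
          show -η + (η - 1) = -1 by ring, show 1 - η + (η - 1) = 0 by ring, Real.rpow_neg_one,
          Real.rpow_zero,
          ENNReal.ofReal_inv_of_pos hx, div_eq_mul_inv, one_mul, mul_comm l, ← div_eq_mul_inv]
  calc ∫⁻ x in Ioi 0, Tmax η f x ^ p * ENNReal.ofReal (x ^ ((η - 1) * p))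
      = ∫⁻ x in Ioi 0, (Tmax η f x * ENNReal.ofReal (x ^ (η - 1))) ^ p := by
        refine setLIntegral_congr_fun measurableSet_Ioi fun x (hx : 0 < x) ↦ ?_
        rw [ENNReal.mul_rpow_of_nonneg _ _ hp0.le,
          ENNReal.ofReal_rpow_of_nonneg (by positivity) hp0.le, ← Real.rpow_mul hx.le]
    _ ≤ ENNReal.ofReal ((2 * (η - 1)⁻¹) ^ p / ((η - 1)⁻¹ * (p - 1))) *
          ∫⁻ z in Ioi 0, ENNReal.ofReal (g z ^ p) :=
        lintegral_rpow_le_of_le_excess hp (inv_pos.mpr (by linarith))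
          ((measurable_id'.pow_const _).mul hf.abs) hg hF
    _ = _ := by
        congr 1
        refine setLIntegral_congr_fun measurableSet_Ioi fun z (hz : 0 < z) ↦ ?_
        rw [Real.mul_rpow (by positivity) (abs_nonneg _), ← Real.rpow_mul hz.le, mul_comm]

end Endpoint

section Holder

variable {p q η : ℝ} {f : ℝ → ℝ}

lemma lintegral_Tmax_integrand_le_holder (hpq : p.HolderConjugate q) (hf : Measurable f)
    {a b x : ℝ} (hab : a + b = η - 1) (hx : 0 ≤ x) (t : ℝ) :
    ∫⁻ z in Ioo (t / 2) t, ENNReal.ofReal (z ^ (η - 1) * |f z| * (t - z + x) ^ (-η)) ≤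
      (∫⁻ z in Ioo (t / 2) t, ENNReal.ofReal (|f z| ^ p * z ^ (a * p))) ^ (1 / p) *
        (∫⁻ z in Ioo (t / 2) t, ENNReal.ofReal (z ^ (b * q) * (t - z + x) ^ (-(η * q)))) ^
          (1 / q) := by
  set φ : ℝ → ℝ≥0∞ := fun z ↦ ENNReal.ofReal (|f z| * z ^ a)
  set ψ : ℝ → ℝ≥0∞ := fun z ↦ ENNReal.ofReal (z ^ b * (t - z + x) ^ (-η))
  have hφ : Measurable φ := (hf.abs.mul (measurable_id'.pow_const _)).ennreal_ofReal
  have hψ : Measurable ψ := ((measurable_id'.pow_const _).mul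
    (((measurable_const.sub measurable_id').add_const x).pow_const _)).ennreal_ofReal
  have hpos : ∀ z ∈ Ioo (t / 2) t, 0 < z ∧ 0 < t - z + x := fun z hz ↦
    ⟨by linarith [hz.1, hz.2], by linarith [hz.2]⟩
  calc ∫⁻ z in Ioo (t / 2) t, ENNReal.ofReal (z ^ (η - 1) * |f z| * (t - z + x) ^ (-η))
      = ∫⁻ z in Ioo (t / 2) t, (φ * ψ) z := by
        refine setLIntegral_congr_fun measurableSet_Ioo fun z hz ↦ ?_
        obtain ⟨hz, -⟩ := hpos z hz
        rw [Pi.mul_apply, ← ENNReal.ofReal_mul (by positivity), ← hab, Real.rpow_add hz]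
        ring_nf
    _ ≤ (∫⁻ z in Ioo (t / 2) t, φ z ^ p) ^ (1 / p) *
          (∫⁻ z in Ioo (t / 2) t, ψ z ^ q) ^ (1 / q) :=
        ENNReal.lintegral_mul_le_Lp_mul_Lq _ hpq hφ.aemeasurable hψ.aemeasurable
    _ = _ := by
        congr 2 <;> refine setLIntegral_congr_fun measurableSet_Ioo fun z hz ↦ ?_ <;>
          obtain ⟨hz, hv⟩ := hpos z hz
        · rw [ENNReal.ofReal_rpow_of_nonneg (by positivity) hpq.nonneg,
            Real.mul_rpow (abs_nonneg _) (by positivity), ← Real.rpow_mul hz.le]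
        · rw [ENNReal.ofReal_rpow_of_nonneg (by positivity) hpq.symm.nonneg,
            Real.mul_rpow (by positivity) (by positivity), ← Real.rpow_mul hz.le,
            ← Real.rpow_mul hv.le, neg_mul]

lemma Tmax_rpow_le_holder (hpq : p.HolderConjugate q) (hf : Measurable f) {s x : ℝ} (hs : s < 1)
    (hsη : s ≤ η * q) (hx : 0 < x) :
    Tmax η f x ^ p ≤
      ENNReal.ofReal ((2 ^ (1 - s) / (1 - s)) ^ (p - 1) * x ^ (s * (p - 1) - η * p)) *
        ∫⁻ z in Ioi x, ENNReal.ofReal (|f z| ^ p * z ^ ((η - 1) * p + (1 - s) * (p - 1))) := by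
  set δ := (η - 1) * p + (1 - s) * (p - 1)
  set G := ∫⁻ z in Ioi x, ENNReal.ofReal (|f z| ^ p * z ^ δ)
  set B := ENNReal.ofReal (2 ^ (1 - s) / (1 - s) * x ^ (s - η * q))
  have hp := hpq.pos
  have hq := hpq.symm.pos
  have hqp : q * (p - 1) = p := by rw [hpq.conjugate_eq]; field_simp [hpq.sub_one_ne_zero]
  have hqp' : 1 / q * p = p - 1 := by field_simp; linarith
  have hab : δ / p + (s - 1) / q = η - 1 := by
    rw [hpq.conjugate_eq]; field_simp [hpq.sub_one_ne_zero]; ring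
  have hT : Tmax η f x ≤ G ^ (1 / p) * B ^ (1 / q) := by
    refine iSup₂_le fun t (ht : 2 * x < t) ↦ ?_
    refine (lintegral_Tmax_integrand_le_holder hpq hf hab hx.le t).trans ?_
    rw [div_mul_cancel₀ _ hp.ne', div_mul_cancel₀ _ hq.ne']
    gcongr
    · exact lintegral_mono_set fun z hz ↦ mem_Ioi.mpr (by linarith [hz.1])
    · exact lintegral_rpow_mul_sub_add_rpow_le hs hsη hx ht
  calc Tmax η f x ^ p ≤ (G ^ (1 / p) * B ^ (1 / q)) ^ p := by gcongr
    _ = B ^ (p - 1) * G := by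
        rw [ENNReal.mul_rpow_of_nonneg _ _ hp.le, ← ENNReal.rpow_mul, ← ENNReal.rpow_mul,
          one_div_mul_cancel hp.ne', ENNReal.rpow_one, mul_comm, hqp']
    _ = _ := by
        rw [ENNReal.ofReal_rpow_of_nonneg (by positivity) (by linarith [hpq.lt]),
          Real.mul_rpow (by positivity) (by positivity), ← Real.rpow_mul hx.le]
        congr 4
        linear_combination (-η) * hqp

lemma lintegral_Tmax_rpow_le_holder (hpq : p.HolderConjugate q) (hf : Measurable f) {γ s : ℝ}
    (hs : s < 1) (hsη : s ≤ η * q) (hu : -1 < γ + s * (p - 1) - η * p) :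
    ∫⁻ x in Ioi 0, Tmax η f x ^ p * ENNReal.ofReal (x ^ γ) ≤
      ENNReal.ofReal ((2 ^ (1 - s) / (1 - s)) ^ (p - 1) / (γ + s * (p - 1) - η * p + 1)) *
        ∫⁻ z in Ioi 0, ENNReal.ofReal (|f z| ^ p * z ^ γ) := by
  set u := γ + s * (p - 1) - η * p
  set C := (2 ^ (1 - s) / (1 - s)) ^ (p - 1)
  set H : ℝ → ℝ≥0∞ := fun z ↦
    ENNReal.ofReal (|f z| ^ p * z ^ ((η - 1) * p + (1 - s) * (p - 1)))
  have hH : Measurable H :=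
    ((hf.abs.pow_const _).mul (measurable_id'.pow_const _)).ennreal_ofReal
  have hC : 0 ≤ C := Real.rpow_nonneg (div_nonneg (by positivity) (by linarith)) _
  calc ∫⁻ x in Ioi 0, Tmax η f x ^ p * ENNReal.ofReal (x ^ γ)
      ≤ ∫⁻ x in Ioi 0,
          ENNReal.ofReal C * (ENNReal.ofReal (x ^ u) * ∫⁻ z in Ioi x, H z) := by
        refine setLIntegral_mono' measurableSet_Ioi fun x (hx : 0 < x) ↦ ?_
        calc Tmax η f x ^ p * ENNReal.ofReal (x ^ γ)
            ≤ ENNReal.ofReal (C * x ^ (s * (p - 1) - η * p)) * (∫⁻ z in Ioi x, H z) *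
                ENNReal.ofReal (x ^ γ) := by gcongr; exact Tmax_rpow_le_holder hpq hf hs hsη hx
          _ = _ := by
              have hxu : x ^ u = x ^ (s * (p - 1) - η * p) * x ^ γ := by
                rw [← Real.rpow_add hx]; congr 1; ring
              rw [hxu, ENNReal.ofReal_mul hC, ENNReal.ofReal_mul (by positivity)]
              ring
    _ = ENNReal.ofReal C * ∫⁻ z in Ioi 0, H z * ENNReal.ofReal (z ^ (u + 1) / (u + 1)) := by
        rw [lintegral_const_mul' _ _ ENNReal.ofReal_ne_top, lintegral_rpow_mul_lintegral_Ioi hu hH]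
    _ = _ := by
        rw [← lintegral_const_mul' _ _ ENNReal.ofReal_ne_top,
          ← lintegral_const_mul' _ _ ENNReal.ofReal_ne_top]
        refine setLIntegral_congr_fun measurableSet_Ioi fun z (hz : 0 < z) ↦ ?_
        rw [← ENNReal.ofReal_mul (by positivity), ← ENNReal.ofReal_mul hC,
          ← ENNReal.ofReal_mul (div_nonneg hC (by linarith))]
        congr 1
        have : z ^ ((η - 1) * p + (1 - s) * (p - 1)) * z ^ (u + 1) = z ^ γ := by
          rw [← Real.rpow_add hz]; congr 1; ring
        rw [← this]
        ring

end Holder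

lemma exists_wNorm_le_of_lintegral_le {p γ : ℝ} (hp : 0 < p)
    {T : (ℝ → ℝ) → ℝ → ℝ≥0∞}
    (h : ∃ K : ℝ, ∀ f : ℝ → ℝ, Measurable f →
      ∫⁻ x in Ioi 0, T f x ^ p * ENNReal.ofReal (x ^ γ) ≤
        ENNReal.ofReal K * ∫⁻ z in Ioi 0, ENNReal.ofReal (|f z| ^ p * z ^ γ)) :
    ∃ C : ℝ≥0, ∀ f : ℝ → ℝ, Measurable f →
      wNorm p γ (T f) ≤ C * wNormR p γ f := by
  obtain ⟨K, hK⟩ := h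
  refine ⟨K.toNNReal ^ (1 / p), fun f hf ↦ ?_⟩
  have hf_norm :
      wNormR p γ f = (∫⁻ z in Ioi 0, ENNReal.ofReal (|f z| ^ p * z ^ γ)) ^ (1 / p) := by
    refine congrArg (· ^ (1 / p))
      (setLIntegral_congr_fun measurableSet_Ioi fun z (hz : 0 < z) ↦ ?_)
    rw [ENNReal.ofReal_rpow_of_nonneg (abs_nonneg _) hp.le, ← ENNReal.ofReal_mul (by positivity)]
  rw [hf_norm, wNorm, ENNReal.coe_rpow_of_nonneg _ (by positivity),
    ← ENNReal.mul_rpow_of_nonneg _ _ (by positivity)]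
  exact ENNReal.rpow_le_rpow (hK f hf) (by positivity)

lemma exists_exponent_holder {p q γ η : ℝ} (hpq : p.HolderConjugate q) (hγ : -1 < γ)
    (hγη : (η - 1) * p < γ) :
    ∃ s, s < 1 ∧ s ≤ η * q ∧ -1 < γ + s * (p - 1) - η * p := by
  have hp := hpq.sub_one_pos
  have hqp : q * (p - 1) = p := by rw [hpq.conjugate_eq]; field_simp
  set d := γ - (η - 1) * p
  have hd : 0 < d / (2 * (p - 1)) := by positivity
  refine ⟨min (η * q) (1 - d / (2 * (p - 1))),
    (min_le_right _ _).trans_lt (by linarith), min_le_left _ _, ?_⟩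
  rcases min_choice (η * q) (1 - d / (2 * (p - 1))) with h | h <;> rw [h]
  · have : η * q * (p - 1) = η * p := by rw [mul_assoc, hqp]
    linarith
  · have : d / (2 * (p - 1)) * (p - 1) = d / 2 := by field_simp
    linarith

/-- boundedness of the maximal operator T_η on power weighted Lp. -/
theorem Tmax_bounded (p γ η : ℝ) (hp : 1 < p)
    (h : (1 < η ∧ (η - 1) * p ≤ γ) ∨ (η = 1 ∧ 0 < γ) ∨
      (0 < η ∧ η < 1 ∧ η - 1 ≤ γ) ∨ (η ≤ 0 ∧ -1 < γ)) :
    ∃ C : ℝ≥0, ∀ f : ℝ → ℝ, Measurable f →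
      wNorm p γ (Tmax η f) ≤ C * wNormR p γ f := by
  have hpq := Real.HolderConjugate.conjExponent hp
  refine exists_wNorm_le_of_lintegral_le (by linarith) ?_
  have hcases : (1 < η ∧ γ = (η - 1) * p) ∨ (-1 < γ ∧ (η - 1) * p < γ) := by
    rcases h with ⟨hη, hγ⟩ | ⟨rfl, hγ⟩ | ⟨hη₀, hη₁, hγ⟩ | ⟨hη, hγ⟩
    · rcases hγ.eq_or_lt with hγ | hγ
      · exact Or.inl ⟨hη, hγ.symm⟩
      · exact Or.inr ⟨by nlinarith, hγ⟩
    · exact Or.inr ⟨by linarith, by simpa using hγ⟩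
    · exact Or.inr ⟨by linarith, by nlinarith⟩
    · exact Or.inr ⟨hγ, by nlinarith⟩
  rcases hcases with ⟨hη, rfl⟩ | ⟨hγ, hγη⟩
  · exact ⟨_, fun f hf ↦ lintegral_Tmax_rpow_le_endpoint hp hη hf⟩
  · obtain ⟨s, hs, hsη, hu⟩ := exists_exponent_holder hpq hγ hγη
    exact ⟨_, fun f hf ↦ lintegral_Tmax_rpow_le_holder hpq hf hs hsη hu⟩
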